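/- arXiv:2305.01724 — 3 statements merged into one kernel-verified Lean document; each statement's English description precedes it below -/
import Mathlib

section
/- Let K be a field and let T = (t_{ijk}) be an m×n×r array over K. Suppose the first flattening T₁ (the m×(nr) matrix whose rows are indexed by i) has rank at most u−1 and the second flattening T₂ (the n×(mr) matrix whose rows are indexed by j) has rank at most v−1. Then the third flattening T₃ (the r×(mn) matrix whose rows are indexed by k) has rank at most (u−1)(v−1). -/
/-!
Let `U` and `V` be the column spaces of the first and second flattenings. Each slice
`(T i j k)_{i,j}` has its columns in `U` and its rows in `V`, so it lies in `U ⊗ V`, a space of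
dimension `dim U * dim V`. Concretely, if `E₁ = P₁ Q₁` is a projection onto `U` factoring through
`K^(dim U)` and `E₂ = P₂ Q₂` one onto `V`, then `T₃ = T₃ (E₁ ⊗ E₂)ᵀ`, and `(E₁ ⊗ E₂)ᵀ` factors
through `K^(dim U * dim V)`.
-/

open Matrix Kronecker

section Flattenings

variable {K : Type*} [Field K]

theorem Matrix.exists_mul_mul_eq_self {m n : Type*} [Fintype m] [Fintype n] (A : Matrix m n K) :
    ∃ (P : Matrix m (Fin A.rank) K) (Q : Matrix (Fin A.rank) m K), P * Q * A = A := by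
  classical
  let U := LinearMap.range A.mulVecLin
  let e : U ≃ₗ[K] (Fin A.rank → K) := (Module.finBasis K U).equivFun
  obtain ⟨g, hg⟩ := U.subtype.exists_leftInverse_of_injective U.ker_subtype
  refine ⟨LinearMap.toMatrix' (U.subtype ∘ₗ e.symm.toLinearMap),
    LinearMap.toMatrix' (e.toLinearMap ∘ₗ g), toLin'.injective ?_⟩
  refine LinearMap.ext fun x => ?_
  have hgA : g (A *ᵥ x) = A.mulVecLin.rangeRestrict x :=
    LinearMap.congr_fun hg (A.mulVecLin.rangeRestrict x)
  simp [Matrix.toLin'_mul, hgA]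

variable {l m n : Type*} [Fintype l] [Fintype m]

theorem flattening₃_mul_kronecker_transpose_eq_self (T : l → m → n → K)
    (E₁ : Matrix l l K) (E₂ : Matrix m m K)
    (h₁ : E₁ * of (fun i (p : m × n) => T i p.1 p.2) = of fun i p => T i p.1 p.2)
    (h₂ : E₂ * of (fun j (p : l × n) => T p.1 j p.2) = of fun j p => T p.1 j p.2) :
    of (fun k (p : l × m) => T p.1 p.2 k) * (E₁ ⊗ₖ E₂)ᵀ = of fun k p => T p.1 p.2 k := by
  ext k ⟨i, j⟩
  have h₁' := congr_fun₂ h₁ i (j, k)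
  have h₂' := fun i' => congr_fun₂ h₂ j (i', k)
  simp only [mul_apply, of_apply, transpose_apply, kroneckerMap_apply] at h₁' h₂' ⊢
  calc ∑ p : l × m, T p.1 p.2 k * (E₁ i p.1 * E₂ j p.2)
      = ∑ i', E₁ i i' * ∑ j', E₂ j j' * T i' j' k := by
        rw [Fintype.sum_prod_type]
        refine Finset.sum_congr rfl fun i' _ => ?_
        rw [Finset.mul_sum]
        exact Finset.sum_congr rfl fun j' _ => by ring
    _ = T i j k := by simp only [h₂', h₁']

theorem rank_flattening₃_le_mul [Fintype n] (T : l → m → n → K) :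
    (of fun k (p : l × m) => T p.1 p.2 k).rank ≤
      (of fun i (p : m × n) => T i p.1 p.2).rank * (of fun j (p : l × n) => T p.1 j p.2).rank := by
  obtain ⟨P₁, Q₁, hE₁⟩ := (of fun i (p : m × n) => T i p.1 p.2).exists_mul_mul_eq_self
  obtain ⟨P₂, Q₂, hE₂⟩ := (of fun j (p : l × n) => T p.1 j p.2).exists_mul_mul_eq_self
  set T₃ := of fun k (p : l × m) => T p.1 p.2 k
  have hT₃ : T₃ * (Q₁ ⊗ₖ Q₂)ᵀ * (P₁ ⊗ₖ P₂)ᵀ = T₃ := by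
    rw [Matrix.mul_assoc, ← transpose_mul, ← mul_kronecker_mul,
      flattening₃_mul_kronecker_transpose_eq_self T _ _ hE₁ hE₂]
  calc T₃.rank = (T₃ * (Q₁ ⊗ₖ Q₂)ᵀ * (P₁ ⊗ₖ P₂)ᵀ).rank := by rw [hT₃]
    _ ≤ (T₃ * (Q₁ ⊗ₖ Q₂)ᵀ).rank := rank_mul_le_left _ _
    _ ≤ Fintype.card (Fin _ × Fin _) := rank_le_card_width _
    _ = _ := by simp

end Flattenings

theorem stmt_4_general {K : Type*} [Field K] (m n r u v : ℕ)
    (T : Fin m → Fin n → Fin r → K)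
    (h1 : (Matrix.of fun i (p : Fin n × Fin r) => T i p.1 p.2).rank ≤ u - 1)
    (h2 : (Matrix.of fun j (p : Fin m × Fin r) => T p.1 j p.2).rank ≤ v - 1) :
    (Matrix.of fun k (p : Fin m × Fin n) => T p.1 p.2 k).rank ≤ (u - 1) * (v - 1) :=
  (rank_flattening₃_le_mul T).trans (Nat.mul_le_mul h1 h2)

/-- If the first flattening of an `m×n×r` array has rank ≤ u−1 and the second flattening has
rank ≤ v−1, then the third flattening has rank ≤ (u−1)(v−1). -/
theorem stmt_4 {K : Type*} [Field K] (m n r u v : ℕ) (hu : 1 ≤ u) (hv : 1 ≤ v)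
    (T : Fin m → Fin n → Fin r → K)
    (h1 : (Matrix.of fun i (p : Fin n × Fin r) => T i p.1 p.2).rank ≤ u - 1)
    (h2 : (Matrix.of fun j (p : Fin m × Fin r) => T p.1 j p.2).rank ≤ v - 1) :
    (Matrix.of fun k (p : Fin m × Fin n) => T p.1 p.2 k).rank ≤ (u - 1) * (v - 1) :=
  stmt_4_general m n r u v T h1 h2
end

section
/- For any integers m,n,r ≥ 1 and u,v,w ≥ 2 with (u−1)(v−1) > w−1, u ≤ m, v ≤ n, and (u−1)(v−1) ≤ r, there exists an m×n×r array T over a field K such that the first flattening of T has rank u−1, the second flattening has rank v−1, and the third flattening has rank strictly greater than w−1. -/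
/-!
The witness is the indicator tensor of the graph `{(a i, b j, c (i, j))}` of injections
`a : ι → α`, `b : κ → β`, `c : ι × κ → γ`. Each of its three flattenings contains an identity
submatrix (of size `|ι|`, `|κ|` and `|ι × κ|` respectively) and vanishes outside the rows of that
submatrix, so its rank is exactly that size. Taking `ι = Fin (u - 1)`, `κ = Fin (v - 1)` and
`c (i, j) = i (v - 1) + j` makes the third flattening have rank `(u - 1)(v - 1) > w - 1`.
-/

open Function

namespace Matrix

variable {α β ι R : Type*} [CommSemiring R] [StrongRankCondition R]

theorem rank_eq_card_of_submatrix_eq_one [Fintype β] [Fintype ι] [DecidableEq ι]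
    (A : Matrix α β R) (g : ι → α) (h : ι → β) (hA : A.submatrix g h = 1)
    (hzero : ∀ x ∉ Set.range g, A x = 0) : A.rank = Fintype.card ι := by
  classical
  apply le_antisymm
  · have hsupp : support A.row ⊆ Finset.univ.image g := fun x hx => by
      by_contra hx'
      exact hx (hzero x fun ⟨i, hi⟩ => hx' (by simp [← hi]))
    exact (A.rank_le_card_of_support_subset _ hsupp).trans Finset.card_image_le
  · simpa [hA] using A.rank_submatrix_le g h

end Matrix

section GraphTensor

variable {α β γ ι κ : Type*} (K : Type*) [Zero K] [One K]

open Classical in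
noncomputable def graphTensor (a : ι → α) (b : κ → β) (c : ι × κ → γ) : α → β → γ → K :=
  fun x y z => if ∃ i j, a i = x ∧ b j = y ∧ c (i, j) = z then 1 else 0

variable {K}

theorem graphTensor_swap (a : ι → α) (b : κ → β) (c : ι × κ → γ) (x : α) (y : β) (z : γ) :
    graphTensor K b a (c ∘ Prod.swap) y x z = graphTensor K a b c x y z := by
  unfold graphTensor
  congr 1
  exact propext ⟨fun ⟨j, i, hj, hi, hc⟩ => ⟨i, j, hi, hj, hc⟩,
    fun ⟨i, j, hi, hj, hc⟩ => ⟨j, i, hj, hi, hc⟩⟩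

end GraphTensor

section GraphTensorRank

variable {α β γ ι κ K : Type*} [CommSemiring K] [StrongRankCondition K] {a : ι → α} {b : κ → β} {c : ι × κ → γ}

theorem rank_flatten₁_graphTensor [Fintype β] [Fintype γ] [Fintype ι] [Nonempty κ]
    (ha : Injective a) (hc : Injective c) :
    (Matrix.of fun x (p : β × γ) => graphTensor K a b c x p.1 p.2).rank = Fintype.card ι := by
  classical
  obtain ⟨j₀⟩ := ‹Nonempty κ›
  refine Matrix.rank_eq_card_of_submatrix_eq_one _ a (fun i => (b j₀, c (i, j₀))) ?_ ?_
  · ext i i'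
    simp [graphTensor, Matrix.one_apply, ha.eq_iff, hc.eq_iff]
  · rintro x hx
    ext p
    simp only [graphTensor, Matrix.of_apply, Pi.zero_apply, ite_eq_right_iff]
    rintro ⟨i, -, rfl, -⟩
    exact absurd ⟨i, rfl⟩ hx

theorem rank_flatten₂_graphTensor [Fintype α] [Fintype γ] [Fintype κ] [Nonempty ι]
    (hb : Injective b) (hc : Injective c) :
    (Matrix.of fun y (p : α × γ) => graphTensor K a b c p.1 y p.2).rank = Fintype.card κ := by
  simpa only [graphTensor_swap] using
    rank_flatten₁_graphTensor (K := K) (b := a) hb (hc.comp Prod.swap_injective)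

theorem rank_flatten₃_graphTensor [Fintype α] [Fintype β] [Fintype ι] [Fintype κ]
    (ha : Injective a) (hb : Injective b) (hc : Injective c) :
    (Matrix.of fun z (p : α × β) => graphTensor K a b c p.1 p.2 z).rank =
      Fintype.card (ι × κ) := by
  classical
  refine Matrix.rank_eq_card_of_submatrix_eq_one _ c (fun p => (a p.1, b p.2)) ?_ ?_
  · ext ⟨i, j⟩ ⟨i', j'⟩
    simp [graphTensor, Matrix.one_apply, ha.eq_iff, hb.eq_iff, hc.eq_iff, eq_comm]
  · rintro z hz
    ext p
    simp only [graphTensor, Matrix.of_apply, Pi.zero_apply, ite_eq_right_iff]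
    rintro ⟨i, j, -, -, rfl⟩
    exact absurd ⟨(i, j), rfl⟩ hz

end GraphTensorRank

theorem stmt_5_general {K : Type*} [Field K] (m n r u v w : ℕ)
    (hu : 2 ≤ u) (hv : 2 ≤ v)
    (h : w - 1 < (u - 1) * (v - 1)) (hum : u ≤ m) (hvn : v ≤ n)
    (hle : (u - 1) * (v - 1) ≤ r) :
    ∃ T : Fin m → Fin n → Fin r → K,
      (Matrix.of fun i (p : Fin n × Fin r) => T i p.1 p.2).rank = u - 1 ∧
      (Matrix.of fun j (p : Fin m × Fin r) => T p.1 j p.2).rank = v - 1 ∧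
      w - 1 < (Matrix.of fun k (p : Fin m × Fin n) => T p.1 p.2 k).rank := by
  have : Nonempty (Fin (u - 1)) := ⟨⟨0, by omega⟩⟩
  have : Nonempty (Fin (v - 1)) := ⟨⟨0, by omega⟩⟩
  have hum' : u - 1 ≤ m := by omega
  have hvn' : v - 1 ≤ n := by omega
  have hc : Injective (Fin.castLE hle ∘ finProdFinEquiv) :=
    (Fin.castLE_injective _).comp finProdFinEquiv.injective
  refine ⟨graphTensor K (Fin.castLE hum') (Fin.castLE hvn') (Fin.castLE hle ∘ finProdFinEquiv),
    ?_, ?_, ?_⟩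
  · simpa using rank_flatten₁_graphTensor (Fin.castLE_injective hum') hc
  · simpa using rank_flatten₂_graphTensor (Fin.castLE_injective hvn') hc
  · simpa [rank_flatten₃_graphTensor (Fin.castLE_injective hum') (Fin.castLE_injective hvn') hc]
      using h

/-- If `(u−1)(v−1) > w−1`, `u ≤ m`, `v ≤ n` and `(u−1)(v−1) ≤ r`, there exists an `m×n×r`
array whose first flattening has rank `u−1`, second flattening has rank `v−1`, and third
flattening has rank strictly greater than `w−1`. -/
theorem stmt_5 {K : Type*} [Field K] (m n r u v w : ℕ)
    (hm : 1 ≤ m) (hn : 1 ≤ n) (hr : 1 ≤ r) (hu : 2 ≤ u) (hv : 2 ≤ v) (hw : 2 ≤ w)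
    (h : w - 1 < (u - 1) * (v - 1)) (hum : u ≤ m) (hvn : v ≤ n)
    (hle : (u - 1) * (v - 1) ≤ r) :
    ∃ T : Fin m → Fin n → Fin r → K,
      (Matrix.of fun i (p : Fin n × Fin r) => T i p.1 p.2).rank = u - 1 ∧
      (Matrix.of fun j (p : Fin m × Fin r) => T p.1 j p.2).rank = v - 1 ∧
      w - 1 < (Matrix.of fun k (p : Fin m × Fin n) => T p.1 p.2 k).rank :=
  stmt_5_general m n r u v w hu hv h hum hvn hle
end

section
/- Buchberger chain criterion: a finite set G of nonzero polynomials in K[x_1,...,x_n] with a fixed monomial order is a Gröbner basis of the ideal it generates if and only if for all M, N ∈ G there exist M_0 = M, M_1, ..., M_k = N in G such that (1) LM(M_i) divides lcm(LM(M), LM(N)) for all i, and (2) for each i, the S-polynomial S(M_{i−1}, M_i) can be written as Σ_j a_j P_j with a_j monomials, P_j ∈ G, and LM(a_j P_j) < lcm(LM(M_{i−1}), LM(M_i)) for all j. -/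
/-!
If `G` is a Gröbner basis, the division algorithm writes every element `f` of the ideal as
`∑ c x^a P` (`P ∈ G`) with every `x^a LM(P) ≤ LM(f)`; for `f = S(M, N)` this is below
`lcm(LM M, LM N)`, so the one-step chain `M, N` works.

Conversely, write `f ∈ (G)` as `∑ c_j x^(a_j) P_j` with the largest `x^e = x^(a_j) LM(P_j)` as
small as possible. The terms reaching `x^e` are scalar multiples of the monic multiples
`x^(e - LM P) P / LC(P)`. Along a chain from `P` to `P'` the difference of two of these telescopes
into S-polynomials shifted up to degree `e`, each of which has a representation below `x^e`.
So if the top coefficients cancelled, `f` would have a representation below `x^e`; hence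
`LM(f) = x^e`, which is divisible by `LM(P_j)`.
-/

open MvPolynomial

/-- Leading exponent of a multivariate polynomial w.r.t. a monomial order. -/
noncomputable def mdeg {σ : Type*} (mo : MonomialOrder σ) {K : Type*} [CommSemiring K]
    (f : MvPolynomial σ K) : σ →₀ ℕ :=
  mo.toSyn.symm (f.support.sup fun e => mo.toSyn e)

/-- Leading coefficient w.r.t. a monomial order. -/
noncomputable def lcoeff {σ : Type*} (mo : MonomialOrder σ) {K : Type*} [CommSemiring K]
    (f : MvPolynomial σ K) : K :=
  f.coeff (mdeg mo f)

/-- The S-polynomial `S(f,g) = (L/LT f)·f − (L/LT g)·g` where `L = lcm(LM f, LM g)`. -/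
noncomputable def spoly {σ : Type*} (mo : MonomialOrder σ) {K : Type*} [Field K]
    (f g : MvPolynomial σ K) : MvPolynomial σ K :=
  monomial (mdeg mo f ⊔ mdeg mo g - mdeg mo f) (lcoeff mo f)⁻¹ * f -
    monomial (mdeg mo f ⊔ mdeg mo g - mdeg mo g) (lcoeff mo g)⁻¹ * g

/-- `G` is a Gröbner basis (of the ideal it generates) w.r.t. `mo`. -/
def IsGroebnerBasis {σ K : Type*} [Field K] (mo : MonomialOrder σ)
    (G : Set (MvPolynomial σ K)) : Prop :=
  ∀ f ∈ Ideal.span G, f ≠ 0 → ∃ g ∈ G, g ≠ 0 ∧ mdeg mo g ≤ mdeg mo f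

lemma sub_mem_of_forall_castSucc_sub_succ_mem {M S : Type*} [AddCommGroup M] [SetLike S M]
    [AddSubgroupClass S M] (W : S) {k : ℕ} (c : Fin (k + 1) → M)
    (h : ∀ i : Fin k, c i.castSucc - c i.succ ∈ W) : c 0 - c (Fin.last k) ∈ W := by
  induction k with
  | zero =>
    show c 0 - c 0 ∈ W
    rw [sub_self]
    exact zero_mem W
  | succ k ih =>
    have := ih (fun i => c i.succ) fun i => by
      show c i.castSucc.succ - c i.succ.succ ∈ W
      rw [Fin.succ_castSucc]
      exact h i.succ
    rw [Fin.succ_zero_eq_one, Fin.succ_last] at this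
    rw [← sub_add_sub_cancel _ (c 1)]
    exact add_mem (h 0) this

section

variable {σ K : Type*} [Field K] {mo : MonomialOrder σ}

section MonicMultiple

variable (mo) in
/-- Its leading term is `x^e` when `LM g ∣ x^e`; otherwise `e - LM g` truncates. -/
noncomputable def monicMultiple (e : σ →₀ ℕ) (g : MvPolynomial σ K) : MvPolynomial σ K :=
  monomial (e - mo.degree g) (mo.leadingCoeff g)⁻¹ * g

lemma spoly_eq_sub_monicMultiple (f g : MvPolynomial σ K) :
    spoly mo f g = monicMultiple mo (mo.degree f ⊔ mo.degree g) f -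
      monicMultiple mo (mo.degree f ⊔ mo.degree g) g :=
  rfl

lemma toSyn_degree_monomial_mul_le (a : σ →₀ ℕ) (c : K) (g : MvPolynomial σ K) :
    mo.toSyn (mo.degree (monomial a c * g)) ≤ mo.toSyn (a + mo.degree g) := by
  refine MonomialOrder.degree_mul_le.trans ?_
  rw [map_add, map_add]
  gcongr
  exact MonomialOrder.degree_monomial_le c

lemma degree_monicMultiple_le {e : σ →₀ ℕ} {g : MvPolynomial σ K} (h : mo.degree g ≤ e) :
    mo.toSyn (mo.degree (monicMultiple mo e g)) ≤ mo.toSyn e := by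
  have := toSyn_degree_monomial_mul_le (mo := mo) (e - mo.degree g) (mo.leadingCoeff g)⁻¹ g
  rwa [tsub_add_cancel_of_le h] at this

lemma coeff_monicMultiple {e : σ →₀ ℕ} {g : MvPolynomial σ K} (hg : g ≠ 0)
    (h : mo.degree g ≤ e) : (monicMultiple mo e g).coeff e = 1 := by
  have := coeff_monomial_mul (mo.degree g) (e - mo.degree g) (mo.leadingCoeff g)⁻¹ g
  rw [tsub_add_cancel_of_le h] at this
  rw [monicMultiple, this, ← MonomialOrder.leadingCoeff,
    inv_mul_cancel₀ (MonomialOrder.leadingCoeff_ne_zero_iff.2 hg)]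

lemma monomial_mul_monicMultiple (b : σ →₀ ℕ) {e : σ →₀ ℕ} {g : MvPolynomial σ K}
    (h : mo.degree g ≤ e) :
    monomial b 1 * monicMultiple mo e g = monicMultiple mo (b + e) g := by
  rw [monicMultiple, monicMultiple, ← mul_assoc, monomial_mul, one_mul, add_tsub_assoc_of_le h]

lemma degree_spoly_lt {f g : MvPolynomial σ K} (hf : f ≠ 0) (hg : g ≠ 0) (h : spoly mo f g ≠ 0) :
    mo.toSyn (mo.degree (spoly mo f g)) < mo.toSyn (mo.degree f ⊔ mo.degree g) := by
  set L := mo.degree f ⊔ mo.degree g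
  have hle : mo.toSyn (mo.degree (spoly mo f g)) ≤ mo.toSyn L :=
    MonomialOrder.degree_sub_le.trans
      (sup_le (degree_monicMultiple_le le_sup_left) (degree_monicMultiple_le le_sup_right))
  refine hle.lt_of_ne fun heq => (MonomialOrder.coeff_degree_ne_zero_iff (m := mo)).2 h ?_
  rw [mo.toSyn.injective heq, spoly_eq_sub_monicMultiple, coeff_sub,
    coeff_monicMultiple hf le_sup_left, coeff_monicMultiple hg le_sup_right, sub_self]

end MonicMultiple

section RepSpan

variable (mo) in
/-- For `D = Iic t` (resp. `Iio t`), the polynomials with a (strict) `t`-representation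
`∑ c_j x^(a_j) P_j` over `G` in the sense of Becker–Weispfenning. -/
noncomputable def repSpan (G : Set (MvPolynomial σ K)) (D : Set mo.syn) :
    Submodule K (MvPolynomial σ K) :=
  Submodule.span K {h | ∃ g ∈ G, ∃ a, mo.toSyn (a + mo.degree g) ∈ D ∧ monomial a 1 * g = h}

variable {G : Set (MvPolynomial σ K)} {D D' : Set mo.syn}

lemma repSpan_mono (h : D ⊆ D') : repSpan mo G D ≤ repSpan mo G D' :=
  Submodule.span_mono fun _ ⟨g, hg, a, ha, hag⟩ => ⟨g, hg, a, h ha, hag⟩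

lemma monomial_mul_eq_smul (a : σ →₀ ℕ) (c : K) (g : MvPolynomial σ K) :
    monomial a c * g = c • (monomial a 1 * g) := by
  rw [← smul_mul_assoc, smul_monomial, smul_eq_mul, mul_one]

lemma monomial_mul_mem_repSpan {g : MvPolynomial σ K} (hg : g ∈ G) {a : σ →₀ ℕ}
    (ha : mo.toSyn (a + mo.degree g) ∈ D) (c : K) : monomial a c * g ∈ repSpan mo G D := by
  rw [monomial_mul_eq_smul]
  exact Submodule.smul_mem _ _ (Submodule.subset_span ⟨g, hg, a, ha, rfl⟩)

lemma monomial_mul_mem_repSpan_of_mem {b : σ →₀ ℕ} (hD : ∀ x ∈ D, mo.toSyn b + x ∈ D') (c : K)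
    {f : MvPolynomial σ K} (hf : f ∈ repSpan mo G D) : monomial b c * f ∈ repSpan mo G D' := by
  induction hf using Submodule.span_induction with
  | mem _ h =>
    obtain ⟨g, hg, a, ha, rfl⟩ := h
    rw [← mul_assoc, monomial_mul, mul_one]
    exact monomial_mul_mem_repSpan hg (by simpa only [add_assoc, map_add] using hD _ ha) c
  | zero => simp
  | add _ _ _ _ h₁ h₂ => rw [mul_add]; exact add_mem h₁ h₂
  | smul r _ _ h => rw [mul_smul_comm]; exact Submodule.smul_mem _ r h

lemma mem_repSpan_iff {f : MvPolynomial σ K} :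
    f ∈ repSpan mo G D ↔ ∃ (t : ℕ) (a : Fin t → (σ →₀ ℕ)) (co : Fin t → K)
      (P : Fin t → MvPolynomial σ K), (∀ j, P j ∈ G) ∧ f = ∑ j, monomial (a j) (co j) * P j ∧
        ∀ j, mo.toSyn (a j + mo.degree (P j)) ∈ D := by
  constructor
  · intro hf
    obtain ⟨t, co, h, rfl⟩ := Submodule.mem_span_set'.1 hf
    choose P hP a ha hh using fun j => (h j).2
    refine ⟨t, a, co, P, hP, Finset.sum_congr rfl fun j _ => ?_, ha⟩
    rw [← hh, monomial_mul_eq_smul (a j) (co j)]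
  · rintro ⟨t, a, co, P, hP, rfl, ha⟩
    exact Submodule.sum_mem _ fun j _ => monomial_mul_mem_repSpan (hP j) (ha j) (co j)

lemma toSyn_mem_of_mem_support (hD : IsLowerSet D) {f : MvPolynomial σ K}
    (hf : f ∈ repSpan mo G D) {d : σ →₀ ℕ} (hd : d ∈ f.support) : mo.toSyn d ∈ D := by
  induction hf using Submodule.span_induction generalizing d with
  | mem _ h =>
    obtain ⟨g, hg, a, ha, rfl⟩ := h
    exact hD ((MonomialOrder.le_degree hd).trans (toSyn_degree_monomial_mul_le a 1 g)) ha
  | zero => simp at hd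
  | add _ _ _ _ h₁ h₂ =>
    classical
    exact (Finset.mem_union.1 (support_add hd)).elim h₁ h₂
  | smul r _ _ h => exact h (support_smul hd)

lemma coeff_eq_zero_of_mem_repSpan_Iio {e : σ →₀ ℕ} {f : MvPolynomial σ K}
    (hf : f ∈ repSpan mo G (Set.Iio (mo.toSyn e))) : f.coeff e = 0 := by
  by_contra h
  exact lt_irrefl _ (toSyn_mem_of_mem_support (isLowerSet_Iio _) hf (mem_support_iff.2 h))

lemma degree_le_of_mem_repSpan_Iic {e : σ →₀ ℕ} {f : MvPolynomial σ K}
    (hf : f ∈ repSpan mo G (Set.Iic (mo.toSyn e))) : mo.toSyn (mo.degree f) ≤ mo.toSyn e :=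
  MonomialOrder.degree_le_iff.2 fun _ hd => toSyn_mem_of_mem_support (isLowerSet_Iic _) hf hd

lemma mem_repSpan_Iic_degree {g : MvPolynomial σ K} (hg : g ∈ G) :
    g ∈ repSpan mo G (Set.Iic (mo.toSyn (mo.degree g))) := by
  have := monomial_mul_mem_repSpan (D := Set.Iic (mo.toSyn (mo.degree g))) hg (a := 0)
    (by rw [zero_add]; exact le_rfl) (1 : K)
  rwa [← one_def, one_mul] at this

lemma mul_mem_repSpan_Iic (r : MvPolynomial σ K) {δ : mo.syn} {f : MvPolynomial σ K}
    (hf : f ∈ repSpan mo G (Set.Iic δ)) :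
    r * f ∈ repSpan mo G (Set.Iic (mo.toSyn (mo.degree r) + δ)) := by
  have hr : r * f = ∑ d ∈ r.support, monomial d (r.coeff d) * f := by
    rw [← Finset.sum_mul, ← as_sum]
  rw [hr]
  refine Submodule.sum_mem _ fun d hd => monomial_mul_mem_repSpan_of_mem (fun x hx => ?_) _ hf
  exact add_le_add (MonomialOrder.le_degree hd) hx

lemma exists_mem_repSpan_Iic_of_mem_span {f : MvPolynomial σ K} (hf : f ∈ Ideal.span G) :
    ∃ δ, f ∈ repSpan mo G (Set.Iic δ) := by
  induction hf using Submodule.span_induction with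
  | mem g hg => exact ⟨_, mem_repSpan_Iic_degree hg⟩
  | zero => exact ⟨0, zero_mem _⟩
  | add _ _ _ _ h₁ h₂ =>
    obtain ⟨δ₁, h₁⟩ := h₁
    obtain ⟨δ₂, h₂⟩ := h₂
    exact ⟨δ₁ ⊔ δ₂, add_mem (repSpan_mono (Set.Iic_subset_Iic.2 le_sup_left) h₁)
      (repSpan_mono (Set.Iic_subset_Iic.2 le_sup_right) h₂)⟩
  | smul r _ _ h =>
    obtain ⟨δ, h⟩ := h
    exact ⟨_, mul_mem_repSpan_Iic r h⟩

lemma eq_zero_or_exists_mem_repSpan_Iic {f : MvPolynomial σ K} (hf : f ∈ repSpan mo G D) :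
    f = 0 ∨ ∃ δ ∈ D, f ∈ repSpan mo G (Set.Iic δ) := by
  induction hf using Submodule.span_induction with
  | mem _ h =>
    obtain ⟨g, hg, a, ha, rfl⟩ := h
    exact Or.inr ⟨_, ha, Submodule.subset_span ⟨g, hg, a, le_rfl, rfl⟩⟩
  | zero => exact Or.inl rfl
  | add x y _ _ h₁ h₂ =>
    rcases h₁ with rfl | ⟨δ₁, hδ₁, h₁⟩
    · simpa using h₂
    rcases h₂ with rfl | ⟨δ₂, hδ₂, h₂⟩
    · simpa using Or.inr ⟨δ₁, hδ₁, h₁⟩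
    exact Or.inr ⟨max δ₁ δ₂, (max_choice δ₁ δ₂).elim (by rwa [·]) (by rwa [·]),
      add_mem (repSpan_mono (Set.Iic_subset_Iic.2 (le_max_left _ _)) h₁)
        (repSpan_mono (Set.Iic_subset_Iic.2 (le_max_right _ _)) h₂)⟩
  | smul r _ _ h =>
    rcases h with rfl | ⟨δ, hδ, h⟩
    · simp
    · exact Or.inr ⟨δ, hδ, Submodule.smul_mem _ r h⟩

end RepSpan

section Criterion

variable {G : Set (MvPolynomial σ K)}

lemma mem_repSpan_Iic_degree_of_isGroebnerBasis (hG : (0 : MvPolynomial σ K) ∉ G)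
    (hGB : IsGroebnerBasis mo G) {f : MvPolynomial σ K} (hf : f ∈ Ideal.span G) :
    f ∈ repSpan mo G (Set.Iic (mo.toSyn (mo.degree f))) := by
  obtain ⟨q, r, hfqr, hdeg, hr⟩ := mo.div_set (B := G)
    (fun b hb => (MonomialOrder.leadingCoeff_ne_zero_iff.2 (ne_of_mem_of_not_mem hb hG)).isUnit) f
  have hr0 : r = 0 := by
    by_contra hr0
    have hrG : r ∈ Ideal.span G := by
      rw [eq_sub_of_add_eq' hfqr.symm]
      exact sub_mem hf ((Finsupp.mem_span_iff_linearCombination _ _ _).2 ⟨q, rfl⟩)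
    obtain ⟨g, hg, -, hgr⟩ := hGB r hrG hr0
    exact hr _ (MonomialOrder.degree_mem_support hr0) g hg hgr
  set δ := mo.toSyn (mo.degree f) -- so that `rw [hfqr]` leaves the bound alone
  rw [hfqr, hr0, add_zero, Finsupp.linearCombination_apply]
  refine Submodule.sum_mem _ fun b _ => repSpan_mono (Set.Iic_subset_Iic.2 (hdeg b)) ?_
  show q b * b ∈ _
  by_cases hq : q b = 0
  · rw [hq, zero_mul]
    exact zero_mem _
  rw [MonomialOrder.degree_mul (ne_of_mem_of_not_mem b.2 hG) hq, add_comm, map_add]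
  exact mul_mem_repSpan_Iic (q b) (mem_repSpan_Iic_degree b.2)

lemma spoly_mem_repSpan_Iio (hG : (0 : MvPolynomial σ K) ∉ G) (hGB : IsGroebnerBasis mo G)
    {M N : MvPolynomial σ K} (hM : M ∈ G) (hN : N ∈ G) :
    spoly mo M N ∈ repSpan mo G (Set.Iio (mo.toSyn (mo.degree M ⊔ mo.degree N))) := by
  by_cases h0 : spoly mo M N = 0
  · rw [h0]
    exact zero_mem _
  have hspan : spoly mo M N ∈ Ideal.span G :=
    sub_mem (Ideal.mul_mem_left _ _ (Ideal.subset_span hM))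
      (Ideal.mul_mem_left _ _ (Ideal.subset_span hN))
  refine repSpan_mono (Set.Iic_subset_Iio.2 ?_)
    (mem_repSpan_Iic_degree_of_isGroebnerBasis hG hGB hspan)
  exact degree_spoly_lt (ne_of_mem_of_not_mem hM hG) (ne_of_mem_of_not_mem hN hG) h0

lemma sub_monicMultiple_mem_of_spoly_mem {M N : MvPolynomial σ K} {e : σ →₀ ℕ}
    (he : mo.degree M ⊔ mo.degree N ≤ e)
    (h : spoly mo M N ∈ repSpan mo G (Set.Iio (mo.toSyn (mo.degree M ⊔ mo.degree N)))) :
    monicMultiple mo e M - monicMultiple mo e N ∈ repSpan mo G (Set.Iio (mo.toSyn e)) := by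
  have hshift : ∀ x ∈ Set.Iio (mo.toSyn (mo.degree M ⊔ mo.degree N)),
      mo.toSyn (e - (mo.degree M ⊔ mo.degree N)) + x ∈ Set.Iio (mo.toSyn e) := fun x hx => by
    rw [Set.mem_Iio, ← tsub_add_cancel_of_le he, map_add, tsub_add_cancel_of_le he]
    exact (add_lt_add_iff_left _).2 hx
  have := monomial_mul_mem_repSpan_of_mem hshift 1 h
  rwa [spoly_eq_sub_monicMultiple, mul_sub, monomial_mul_monicMultiple _ le_sup_left,
    monomial_mul_monicMultiple _ le_sup_right, tsub_add_cancel_of_le he] at this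

lemma repSpan_Iic_le_Iio {e : σ →₀ ℕ} (h : ∀ g ∈ G, ¬ mo.degree g ≤ e) :
    repSpan mo G (Set.Iic (mo.toSyn e)) ≤ repSpan mo G (Set.Iio (mo.toSyn e)) := by
  refine Submodule.span_mono fun _ ⟨g, hg, a, ha, hag⟩ => ⟨g, hg, a, ?_, hag⟩
  refine lt_of_le_of_ne ha fun heq => h g hg ?_
  rw [← mo.toSyn.injective heq]
  exact le_add_self

lemma sub_coeff_smul_monicMultiple_mem (hG : (0 : MvPolynomial σ K) ∉ G) {e : σ →₀ ℕ}
    (hS : ∀ M ∈ G, ∀ N ∈ G, mo.degree M ≤ e → mo.degree N ≤ e →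
      monicMultiple mo e M - monicMultiple mo e N ∈ repSpan mo G (Set.Iio (mo.toSyn e)))
    {g : MvPolynomial σ K} (hg : g ∈ G) (hge : mo.degree g ≤ e) {f : MvPolynomial σ K}
    (hf : f ∈ repSpan mo G (Set.Iic (mo.toSyn e))) :
    f - f.coeff e • monicMultiple mo e g ∈ repSpan mo G (Set.Iio (mo.toSyn e)) := by
  induction hf using Submodule.span_induction with
  | mem _ h =>
    obtain ⟨g', hg', a, ha, rfl⟩ := h
    rcases (Set.mem_Iic.1 ha).lt_or_eq with hlt | heq
    · have hmem : monomial a 1 * g' ∈ repSpan mo G (Set.Iio (mo.toSyn e)) :=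
        Submodule.subset_span ⟨g', hg', a, hlt, rfl⟩
      rw [coeff_eq_zero_of_mem_repSpan_Iio hmem, zero_smul, sub_zero]
      exact hmem
    have hae : a + mo.degree g' = e := mo.toSyn.injective heq
    have hg'0 : g' ≠ 0 := ne_of_mem_of_not_mem hg' hG
    have hg'e : mo.degree g' ≤ e := hae ▸ le_add_self
    have hlc : mo.leadingCoeff g' ≠ 0 := MonomialOrder.leadingCoeff_ne_zero_iff.2 hg'0
    have hmul : monomial a 1 * g' = mo.leadingCoeff g' • monicMultiple mo e g' := by
      rw [monicMultiple, ← smul_mul_assoc, smul_monomial, smul_eq_mul, mul_inv_cancel₀ hlc,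
        ← hae, add_tsub_cancel_right]
    rw [hmul, coeff_smul, coeff_monicMultiple hg'0 hg'e, smul_eq_mul, mul_one, ← smul_sub]
    exact Submodule.smul_mem _ _ (hS g' hg' g hg hg'e hge)
  | zero => simp
  | add x y _ _ hx hy =>
    rw [coeff_add, add_smul, add_sub_add_comm]
    exact add_mem hx hy
  | smul r x _ hx =>
    rw [coeff_smul, smul_eq_mul, mul_smul, ← smul_sub]
    exact Submodule.smul_mem _ r hx

lemma isGroebnerBasis_of_forall_sub_monicMultiple_mem (hG : (0 : MvPolynomial σ K) ∉ G)
    (hS : ∀ e, ∀ M ∈ G, ∀ N ∈ G, mo.degree M ≤ e → mo.degree N ≤ e →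
      monicMultiple mo e M - monicMultiple mo e N ∈ repSpan mo G (Set.Iio (mo.toSyn e))) :
    IsGroebnerBasis mo G := by
  intro f hf hf0
  obtain ⟨δ, hδ, hmin⟩ := mo.wellFoundedLT_syn.wf.has_min {δ | f ∈ repSpan mo G (Set.Iic δ)}
    (exists_mem_repSpan_Iic_of_mem_span hf)
  obtain ⟨e, rfl⟩ := mo.toSyn.surjective δ
  have hlow : f ∉ repSpan mo G (Set.Iio (mo.toSyn e)) := fun h => by
    obtain ⟨δ', hδ', h'⟩ := (eq_zero_or_exists_mem_repSpan_Iic h).resolve_left hf0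
    exact hmin δ' h' hδ'
  obtain ⟨g, hg, hge⟩ : ∃ g ∈ G, mo.degree g ≤ e := by
    by_contra! h
    exact hlow (repSpan_Iic_le_Iio h hδ)
  have hcoeff : f.coeff e ≠ 0 := fun h0 => hlow <| by
    simpa [h0] using sub_coeff_smul_monicMultiple_mem hG (hS e) hg hge hδ
  have hdeg : mo.degree f = e := mo.toSyn.injective <| le_antisymm
    (degree_le_of_mem_repSpan_Iic hδ) (MonomialOrder.le_degree (mem_support_iff.2 hcoeff))
  refine ⟨g, hg, ne_of_mem_of_not_mem hg hG, ?_⟩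
  show mo.degree g ≤ mo.degree f
  rwa [hdeg]

end Criterion

end

/-- Buchberger's chain criterion: a finite set `G` of nonzero polynomials is a Gröbner basis
iff any two elements `M, N` of `G` are connected by a chain in `G` whose consecutive
S-polynomials admit representations with sufficiently small leading monomials. -/
theorem stmt_16 {σ K : Type*} [Field K] (mo : MonomialOrder σ)
    (G : Finset (MvPolynomial σ K)) (hG : (0 : MvPolynomial σ K) ∉ G) :
    IsGroebnerBasis mo (G : Set (MvPolynomial σ K)) ↔
      ∀ M ∈ G, ∀ N ∈ G, ∃ (k : ℕ) (c : Fin (k + 1) → MvPolynomial σ K),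
        c 0 = M ∧ c (Fin.last k) = N ∧ (∀ i, c i ∈ G) ∧
        (∀ i, mdeg mo (c i) ≤ mdeg mo M ⊔ mdeg mo N) ∧
        ∀ i : Fin k, ∃ (t : ℕ) (a : Fin t → (σ →₀ ℕ)) (co : Fin t → K)
            (P : Fin t → MvPolynomial σ K),
          (∀ j, P j ∈ G) ∧
          spoly mo (c i.castSucc) (c i.succ) = ∑ j, monomial (a j) (co j) * P j ∧
          ∀ j, mo.toSyn (a j + mdeg mo (P j)) <
            mo.toSyn (mdeg mo (c i.castSucc) ⊔ mdeg mo (c i.succ)) := by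
  constructor
  · intro hGB M hM N hN
    refine ⟨1, ![M, N], rfl, rfl, Fin.forall_fin_two.2 ⟨hM, hN⟩,
      Fin.forall_fin_two.2 ⟨le_sup_left, le_sup_right⟩, fun i => ?_⟩
    obtain rfl := Subsingleton.elim i 0
    exact mem_repSpan_iff.1 (spoly_mem_repSpan_Iio hG hGB hM hN)
  · intro hchain
    refine isGroebnerBasis_of_forall_sub_monicMultiple_mem hG fun e M hM N hN hMe hNe => ?_
    obtain ⟨k, c, rfl, rfl, -, hc, hlink⟩ := hchain M hM N hN
    refine sub_mem_of_forall_castSucc_sub_succ_mem _ (fun i => monicMultiple mo e (c i))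
      fun i => sub_monicMultiple_mem_of_spoly_mem ?_ (mem_repSpan_iff.2 (hlink i))
    exact sup_le ((hc _).trans (sup_le hMe hNe)) ((hc _).trans (sup_le hMe hNe))
end
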